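/- In the OPT setup, let F ⊆ {1,…,m} be any set of rows with X_{W*} ⊆ F, sprank(A^S_F) = n − 1, and |F \ X_{W*}| ≥ (n − 1) − sprank(A^S_{X_{W*}}). Then |F| = |OPT| (hence m − |F| = spcospark(A^S)). -/

import Mathlib

open Matrix MeasureTheory

/-- `A` has sparsity pattern `S`: the nonzero entries of `A` are exactly those indexed by `S`. -/
def HasPattern {m n : ℕ} (S : Finset (Fin m × Fin n)) (A : Matrix (Fin m) (Fin n) ℝ) : Prop :=
  ∀ i j, A i j ≠ 0 ↔ (i, j) ∈ S

/-- Generic rank of the class of matrices with sparsity pattern `S`. -/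
noncomputable def sprank {m n : ℕ} (S : Finset (Fin m × Fin n)) : ℕ :=
  sSup {r : ℕ | ∃ A : Matrix (Fin m) (Fin n) ℝ, HasPattern S A ∧ A.rank = r}

/-- The sparsity pattern restricted to the rows in `T` (rows outside `T` become zero). -/
def patternOn {m n : ℕ} (S : Finset (Fin m × Fin n)) (T : Finset (Fin m)) :
    Finset (Fin m × Fin n) :=
  S.filter (fun p => p.1 ∈ T)

/-- A matching of a sparsity pattern: any two distinct pairs differ in both coordinates. -/
def IsMatching {m n : ℕ} (M : Finset (Fin m × Fin n)) : Prop :=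
  ∀ p ∈ M, ∀ q ∈ M, p ≠ q → p.1 ≠ q.1 ∧ p.2 ≠ q.2

/-- `nu S` : maximum cardinality of a matching contained in `S`. -/
noncomputable def nu {m n : ℕ} (S : Finset (Fin m × Fin n)) : ℕ :=
  sSup {k : ℕ | ∃ M ⊆ S, IsMatching M ∧ M.card = k}

/-- ℓ₀ "norm": number of nonzero entries of a vector. -/
noncomputable def l0 {m : ℕ} (y : Fin m → ℝ) : ℕ :=
  (Finset.univ.filter (fun i => y i ≠ 0)).card

/-- `cospark A` : minimum of `‖A x‖₀` over nonzero `x`. -/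
noncomputable def cospark {m n : ℕ} (A : Matrix (Fin m) (Fin n) ℝ) : ℕ :=
  sInf {k : ℕ | ∃ x : Fin n → ℝ, x ≠ 0 ∧ l0 (A.mulVec x) = k}

/-- Generic cospark of the class of matrices with sparsity pattern `S`. -/
noncomputable def spcospark {m n : ℕ} (S : Finset (Fin m × Fin n)) : ℕ :=
  sSup {k : ℕ | ∃ A : Matrix (Fin m) (Fin n) ℝ, HasPattern S A ∧ cospark A = k}

/-- The row-submatrix `A_T`, realized as `A` with the rows outside `T` zeroed out. -/
noncomputable def rowRestrict {m n : ℕ} (A : Matrix (Fin m) (Fin n) ℝ) (T : Finset (Fin m)) :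
    Matrix (Fin m) (Fin n) ℝ :=
  Matrix.of fun i j => if i ∈ T then A i j else 0

/-- `X_W` : the rows of the pattern `S` all of whose nonzero positions lie in the columns `W`. -/
def rowsIn {m n : ℕ} (S : Finset (Fin m × Fin n)) (W : Finset (Fin n)) : Finset (Fin m) :=
  Finset.univ.filter (fun i => ∀ j, (i, j) ∈ S → j ∈ W)

/-!
By König–Hall and a generic choice of entries, `sprank = ν`. Take a König–Hall set `R ⊆ OPT`
of deficiency `|OPT| - (n - 1)`; the maximum matching `M` must match every neighbour of `R`
back into `R`, so all neighbours of `R` lie in `W*`, hence `R ⊆ X_{W*}` and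
`ν(S_{X_{W*}}) ≤ |X_{W*}| - |OPT| + (n - 1)`. The hypothesis on `|F \ X_{W*}|` then gives
`|F| ≥ |OPT|`, and maximality of `OPT` gives `|F| ≤ |OPT|`.

The generic cospark is `m - |OPT|`: a kernel vector of `A_OPT` vanishes on `OPT`, and for
generic `A` the rows where `Ax` vanishes carry matching number `< n`, so they enlarge, one row
at a time, to a row set of matching number exactly `n - 1`, which has at most `|OPT|` rows.
-/

section

variable {m n : ℕ} {P : Finset (Fin m × Fin n)}

namespace IsMatching

variable {N : Finset (Fin m × Fin n)}

lemma eq_of_fst_eq (h : IsMatching N) {p q : Fin m × Fin n} (hp : p ∈ N) (hq : q ∈ N)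
    (hpq : p.1 = q.1) : p = q :=
  by_contra fun hne => (h p hp q hq hne).1 hpq

lemma eq_of_snd_eq (h : IsMatching N) {p q : Fin m × Fin n} (hp : p ∈ N) (hq : q ∈ N)
    (hpq : p.2 = q.2) : p = q :=
  by_contra fun hne => (h p hp q hq hne).2 hpq

lemma card_image_fst (h : IsMatching N) : (N.image Prod.fst).card = N.card :=
  Finset.card_image_of_injOn fun _ hp _ hq => h.eq_of_fst_eq hp hq

lemma card_image_snd (h : IsMatching N) : (N.image Prod.snd).card = N.card :=
  Finset.card_image_of_injOn fun _ hp _ hq => h.eq_of_snd_eq hp hq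

lemma mono {N' : Finset (Fin m × Fin n)} (h : IsMatching N) (hN' : N' ⊆ N) : IsMatching N' :=
  fun p hp q hq => h p (hN' hp) q (hN' hq)

end IsMatching

lemma nu_bddAbove : BddAbove {k : ℕ | ∃ N ⊆ P, IsMatching N ∧ N.card = k} := by
  refine ⟨P.card, ?_⟩
  rintro _ ⟨N, hNP, -, rfl⟩
  exact Finset.card_le_card hNP

lemma exists_isMatching_card_eq_nu (P : Finset (Fin m × Fin n)) :
    ∃ N ⊆ P, IsMatching N ∧ N.card = nu P :=
  Nat.sSup_mem (s := {k | ∃ N ⊆ P, IsMatching N ∧ N.card = k})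
    ⟨0, ∅, Finset.empty_subset _, by simp [IsMatching], rfl⟩ nu_bddAbove

lemma IsMatching.card_le_nu {N : Finset (Fin m × Fin n)} (hN : IsMatching N) (hNP : N ⊆ P) :
    N.card ≤ nu P :=
  le_csSup nu_bddAbove ⟨N, hNP, hN, rfl⟩

lemma nu_le_of_forall {k : ℕ} (h : ∀ N ⊆ P, IsMatching N → N.card ≤ k) : nu P ≤ k := by
  obtain ⟨N, hNP, hN, hcard⟩ := exists_isMatching_card_eq_nu P
  exact hcard ▸ h N hNP hN

lemma mem_patternOn {T : Finset (Fin m)} {p : Fin m × Fin n} :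
    p ∈ patternOn P T ↔ p ∈ P ∧ p.1 ∈ T := Finset.mem_filter

lemma patternOn_univ : patternOn P Finset.univ = P := by
  simp [patternOn]

lemma patternOn_patternOn (T R : Finset (Fin m)) :
    patternOn (patternOn P T) R = patternOn P (R ∩ T) := by
  ext p
  simp only [mem_patternOn, Finset.mem_inter]
  tauto

def colsOf (P : Finset (Fin m × Fin n)) (R : Finset (Fin m)) : Finset (Fin n) :=
  (patternOn P R).image Prod.snd

lemma mem_colsOf {R : Finset (Fin m)} {j : Fin n} : j ∈ colsOf P R ↔ ∃ i ∈ R, (i, j) ∈ P := by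
  simp [colsOf, mem_patternOn, and_comm]

lemma subset_rowsIn_of_colsOf_subset {R : Finset (Fin m)} {W : Finset (Fin n)}
    (h : colsOf P R ⊆ W) : R ⊆ rowsIn P W := fun i hi =>
  Finset.mem_filter.2 ⟨Finset.mem_univ i, fun _ hij => h (mem_colsOf.2 ⟨i, hi, hij⟩)⟩

lemma IsMatching.card_le_card_sdiff_add {N : Finset (Fin m × Fin n)} (hN : IsMatching N)
    {T : Finset (Fin m)} (hNT : N ⊆ patternOn P T) (R : Finset (Fin m)) :
    N.card ≤ (T \ R).card + (colsOf P R ∩ N.image Prod.snd).card := by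
  rw [← Finset.card_filter_add_card_filter_not (s := N) (fun p => p.1 ∉ R)]
  gcongr
  · rw [← (hN.mono (Finset.filter_subset _ N)).card_image_fst]
    refine Finset.card_le_card fun i hi => ?_
    obtain ⟨p, hp, rfl⟩ := Finset.mem_image.1 hi
    rw [Finset.mem_filter] at hp
    exact Finset.mem_sdiff.2 ⟨(mem_patternOn.1 (hNT hp.1)).2, hp.2⟩
  · rw [← (hN.mono (Finset.filter_subset _ N)).card_image_snd]
    refine Finset.card_le_card fun j hj => ?_
    obtain ⟨p, hp, rfl⟩ := Finset.mem_image.1 hj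
    rw [Finset.mem_filter, not_not] at hp
    exact Finset.mem_inter.2 ⟨mem_colsOf.2 ⟨p.1, hp.2, (mem_patternOn.1 (hNT hp.1)).1⟩,
      Finset.mem_image_of_mem _ hp.1⟩

lemma nu_patternOn_le (T R : Finset (Fin m)) :
    nu (patternOn P T) ≤ (T \ R).card + (colsOf P R).card :=
  nu_le_of_forall fun _ hN hmatch =>
    (hmatch.card_le_card_sdiff_add hN R).trans (by gcongr; exact Finset.inter_subset_left)

/-- Hall's theorem, applied after adding `d` dummy columns adjacent to every row. -/
lemma card_le_nu_add_of_hall {d : ℕ}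
    (hall : ∀ R : Finset (Fin m), R.card ≤ (colsOf P R).card + d) :
    m ≤ nu P + d := by
  let t : Fin m → Finset (Fin n ⊕ Fin d) := fun i => (colsOf P {i}).disjSum Finset.univ
  have ht : ∀ R : Finset (Fin m), R.card ≤ (R.biUnion t).card := by
    intro R
    rcases R.eq_empty_or_nonempty with rfl | ⟨i₀, hi₀⟩
    · simp
    calc R.card ≤ (colsOf P R).card + d := hall R
      _ = ((colsOf P R).disjSum (Finset.univ : Finset (Fin d))).card := by simp
      _ ≤ (R.biUnion t).card := Finset.card_le_card fun x hx => ?_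
    rw [Finset.mem_biUnion]
    rcases x with j | k
    · obtain ⟨i, hi, hij⟩ := mem_colsOf.1 (Finset.inl_mem_disjSum.1 hx)
      exact ⟨i, hi, Finset.inl_mem_disjSum.2
        (mem_colsOf.2 ⟨i, Finset.mem_singleton_self i, hij⟩)⟩
    · exact ⟨i₀, hi₀, by simp [t]⟩
  obtain ⟨f, hf, hft⟩ := (Finset.all_card_le_biUnion_card_iff_exists_injective t).1 ht
  let N := P.filter fun p => f p.1 = Sum.inl p.2
  have hN : IsMatching N := by
    intro p hp q hq hne
    simp only [N, Finset.mem_filter] at hp hq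
    refine ⟨fun h => hne ?_, fun h => hne ?_⟩
    · exact Prod.ext h (Sum.inl_injective (hp.2.symm.trans (h ▸ hq.2)))
    · exact Prod.ext (hf (hp.2.trans (h ▸ hq.2.symm))) h
  have himage : Finset.univ.image f ⊆
      (N.image Prod.snd).disjSum (Finset.univ : Finset (Fin d)) := by
    intro x hx
    obtain ⟨i, -, rfl⟩ := Finset.mem_image.1 hx
    rcases hfi : f i with j | k
    · have hij : (i, j) ∈ P := by
        have := hft i
        rw [hfi, Finset.inl_mem_disjSum, mem_colsOf] at this
        obtain ⟨i', hi', h⟩ := this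
        rwa [Finset.mem_singleton.1 hi'] at h
      exact Finset.inl_mem_disjSum.2
        (Finset.mem_image.2 ⟨(i, j), Finset.mem_filter.2 ⟨hij, hfi⟩, rfl⟩)
    · simp
  calc m = (Finset.univ.image f).card := by simp [Finset.card_image_of_injective _ hf]
    _ ≤ N.card + d := by
        refine (Finset.card_le_card himage).trans ?_
        rw [Finset.card_disjSum, hN.card_image_snd, Finset.card_univ, Fintype.card_fin]
    _ ≤ nu P + d := by gcongr; exact hN.card_le_nu (Finset.filter_subset _ P)

lemma exists_card_add_card_colsOf_le (P : Finset (Fin m × Fin n)) :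
    ∃ R : Finset (Fin m), m + (colsOf P R).card ≤ nu P + R.card := by
  by_contra! h
  have := card_le_nu_add_of_hall (P := P) (d := m - nu P - 1) fun R => by have := h R; omega
  have := h ∅
  simp [colsOf, patternOn] at this
  omega

lemma exists_subset_card_add_card_colsOf_le (P : Finset (Fin m × Fin n)) (T : Finset (Fin m)) :
    ∃ R ⊆ T, T.card + (colsOf P R).card ≤ nu (patternOn P T) + R.card := by
  obtain ⟨R, hR⟩ := exists_card_add_card_colsOf_le (patternOn P T)
  refine ⟨R ∩ T, Finset.inter_subset_right, ?_⟩
  rw [colsOf, patternOn_patternOn, ← colsOf] at hR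
  have h1 : (R \ T).card ≤ m - T.card := by
    simpa [Finset.card_univ_sdiff] using
      Finset.card_le_card (Finset.sdiff_subset_sdiff (Finset.subset_univ R) (le_refl T))
  have h2 := Finset.card_sdiff_add_card_inter R T
  have h3 : T.card ≤ m := by simpa using T.card_le_univ
  omega

lemma Matrix.rank_add_le (A B : Matrix (Fin m) (Fin n) ℝ) : (A + B).rank ≤ A.rank + B.rank := by
  unfold Matrix.rank
  rw [Matrix.mulVecLin_add]
  exact (Submodule.finrank_mono (LinearMap.range_add_le _ _)).trans
    (Submodule.finrank_add_le_finrank_add_finrank _ _)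

lemma Matrix.rank_le_card_of_forall_ne_zero_mem (A : Matrix (Fin m) (Fin n) ℝ) (C : Finset (Fin n))
    (h : ∀ i j, A i j ≠ 0 → j ∈ C) : A.rank ≤ C.card := by
  rw [← Matrix.rank_transpose]
  refine Aᵀ.rank_le_card_of_support_subset C fun j hj => by_contra fun hjC => hj ?_
  funext i
  by_contra hij
  exact hjC (h i j hij)

lemma rowRestrict_apply (A : Matrix (Fin m) (Fin n) ℝ) (T : Finset (Fin m)) (i : Fin m)
    (j : Fin n) : rowRestrict A T i j = if i ∈ T then A i j else 0 := rfl

lemma rowRestrict_univ (A : Matrix (Fin m) (Fin n) ℝ) : rowRestrict A Finset.univ = A := by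
  ext i j
  simp [rowRestrict_apply]

lemma rowRestrict_add_rowRestrict_compl (A : Matrix (Fin m) (Fin n) ℝ) (T : Finset (Fin m)) :
    rowRestrict A T + rowRestrict A Tᶜ = A := by
  ext i j
  by_cases hi : i ∈ T <;> simp [rowRestrict_apply, hi]

lemma rank_rowRestrict_le_card (A : Matrix (Fin m) (Fin n) ℝ) (T : Finset (Fin m)) :
    (rowRestrict A T).rank ≤ T.card :=
  (rowRestrict A T).rank_le_card_of_support_subset T fun _ hi => by_contra fun hiT =>
    hi (funext fun _ => if_neg hiT)

lemma rowRestrict_mulVec (A : Matrix (Fin m) (Fin n) ℝ) (T : Finset (Fin m)) (x : Fin n → ℝ)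
    (i : Fin m) : (rowRestrict A T *ᵥ x) i = if i ∈ T then (A *ᵥ x) i else 0 := by
  by_cases hi : i ∈ T <;> simp [Matrix.mulVec, dotProduct, rowRestrict_apply, hi]

lemma Matrix.rank_lt_iff_exists_mulVec_eq_zero (A : Matrix (Fin m) (Fin n) ℝ) :
    A.rank < n ↔ ∃ x ≠ 0, A *ᵥ x = 0 := by
  have hrn := LinearMap.finrank_range_add_finrank_ker A.mulVecLin
  rw [Module.finrank_fintype_fun_eq_card, Fintype.card_fin, ← Matrix.rank] at hrn
  rw [show A.rank < n ↔ Module.finrank ℝ (LinearMap.ker A.mulVecLin) ≠ 0 by omega,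
    Ne, Submodule.finrank_eq_zero, ← Ne, Submodule.ne_bot_iff]
  simp [and_comm]

lemma hasPattern_rowRestrict {A : Matrix (Fin m) (Fin n) ℝ} (hA : HasPattern P A)
    (T : Finset (Fin m)) : HasPattern (patternOn P T) (rowRestrict A T) := by
  intro i j
  by_cases hi : i ∈ T <;> simp [rowRestrict_apply, hi, mem_patternOn, hA i j]

lemma HasPattern.rank_le_nu {A : Matrix (Fin m) (Fin n) ℝ} (hA : HasPattern P A) :
    A.rank ≤ nu P := by
  obtain ⟨R, hR⟩ := exists_card_add_card_colsOf_le P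
  have hcols : (rowRestrict A R).rank ≤ (colsOf P R).card :=
    (rowRestrict A R).rank_le_card_of_forall_ne_zero_mem _ fun i j hij => by
      by_cases hi : i ∈ R
      · rw [rowRestrict_apply, if_pos hi] at hij
        exact mem_colsOf.2 ⟨i, hi, (hA i j).1 hij⟩
      · exact absurd (if_neg hi) hij
  have hrows := rank_rowRestrict_le_card A Rᶜ
  have hRc : Rᶜ.card = m - R.card := by simp [Finset.card_compl]
  have hRm : R.card ≤ m := by simpa using R.card_le_univ
  have hsplit := (rowRestrict A R).rank_add_le (rowRestrict A Rᶜ)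
  rw [rowRestrict_add_rowRestrict_compl] at hsplit
  omega

open MvPolynomial in
noncomputable def symbolicMatrix (P : Finset (Fin m × Fin n)) :
    Matrix (Fin m) (Fin n) (MvPolynomial (Fin m × Fin n) ℝ) :=
  Matrix.of fun i j => if (i, j) ∈ P then X (i, j) else 0

def patternMatrix (P : Finset (Fin m × Fin n)) (x : Fin m × Fin n → ℝ) :
    Matrix (Fin m) (Fin n) ℝ :=
  Matrix.of fun i j => if (i, j) ∈ P then x (i, j) else 0

def matchingMinor {R : Type*} (A : Matrix (Fin m) (Fin n) R) (N : Finset (Fin m × Fin n)) :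
    Matrix N N R :=
  A.submatrix (fun p => p.1.1) (fun p => p.1.2)

lemma map_eval_symbolicMatrix (x : Fin m × Fin n → ℝ) :
    (symbolicMatrix P).map (MvPolynomial.eval x) = patternMatrix P x := by
  ext i j
  by_cases h : (i, j) ∈ P <;> simp [symbolicMatrix, patternMatrix, h]

lemma matchingMinor_patternMatrix_indicator {N : Finset (Fin m × Fin n)} (hN : IsMatching N)
    (hNP : N ⊆ P) : matchingMinor (patternMatrix P fun e => if e ∈ N then 1 else 0) N = 1 := by
  ext p q
  by_cases hpq : p = q
  · subst hpq
    simp [matchingMinor, patternMatrix, hNP p.2]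
  · have : ((p : Fin m × Fin n).1, (q : Fin m × Fin n).2) ∉ N := fun h =>
      hpq (Subtype.ext ((hN.eq_of_fst_eq h p.2 rfl).symm.trans (hN.eq_of_snd_eq h q.2 rfl)))
    simp [matchingMinor, patternMatrix, this, Matrix.one_apply_ne hpq]

lemma det_matchingMinor_symbolicMatrix_ne_zero {N : Finset (Fin m × Fin n)} (hN : IsMatching N)
    (hNP : N ⊆ P) : (matchingMinor (symbolicMatrix P) N).det ≠ 0 := by
  intro h
  have := congrArg (MvPolynomial.eval fun e => if e ∈ N then (1 : ℝ) else 0) h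
  rw [RingHom.map_det, RingHom.mapMatrix_apply, matchingMinor, ← Matrix.submatrix_map,
    map_eval_symbolicMatrix, ← matchingMinor, matchingMinor_patternMatrix_indicator hN hNP] at this
  simp at this

lemma exists_patternMatrix_det_matchingMinor_ne_zero (P : Finset (Fin m × Fin n)) :
    ∃ x : Fin m × Fin n → ℝ, (∀ e ∈ P, x e ≠ 0) ∧
      ∀ N ⊆ P, IsMatching N → (matchingMinor (patternMatrix P x) N).det ≠ 0 := by
  classical
  let Q : MvPolynomial (Fin m × Fin n) ℝ := (∏ e ∈ P, MvPolynomial.X e) *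
    ∏ N ∈ P.powerset.filter IsMatching, (matchingMinor (symbolicMatrix P) N).det
  have hQ : Q ≠ 0 := by
    refine mul_ne_zero (Finset.prod_ne_zero_iff.2 fun e _ => MvPolynomial.X_ne_zero e)
      (Finset.prod_ne_zero_iff.2 fun N hN => ?_)
    rw [Finset.mem_filter, Finset.mem_powerset] at hN
    exact det_matchingMinor_symbolicMatrix_ne_zero hN.2 hN.1
  obtain ⟨x, hx⟩ : ∃ x, MvPolynomial.eval x Q ≠ 0 := by
    by_contra! h
    exact hQ (MvPolynomial.funext fun x => by simp [h x])
  simp only [Q, map_mul, map_prod, MvPolynomial.eval_X, mul_ne_zero_iff,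
    Finset.prod_ne_zero_iff, Finset.mem_filter, Finset.mem_powerset] at hx
  refine ⟨x, hx.1, fun N hNP hN => ?_⟩
  have := hx.2 N ⟨hNP, hN⟩
  rwa [RingHom.map_det, RingHom.mapMatrix_apply, matchingMinor, ← Matrix.submatrix_map,
    map_eval_symbolicMatrix] at this

lemma exists_hasPattern_forall_nu_le_rank (P : Finset (Fin m × Fin n)) :
    ∃ A : Matrix (Fin m) (Fin n) ℝ, HasPattern P A ∧
      ∀ T : Finset (Fin m), nu (patternOn P T) ≤ (rowRestrict A T).rank := by
  obtain ⟨x, hxP, hdet⟩ := exists_patternMatrix_det_matchingMinor_ne_zero P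
  refine ⟨patternMatrix P x, fun i j => ?_, fun T => ?_⟩
  · by_cases h : (i, j) ∈ P <;> simp [patternMatrix, h, hxP]
  obtain ⟨N, hNT, hN, hcard⟩ := exists_isMatching_card_eq_nu (patternOn P T)
  have hminor : matchingMinor (rowRestrict (patternMatrix P x) T) N =
      matchingMinor (patternMatrix P x) N := by
    ext p q
    simp [matchingMinor, rowRestrict_apply, (mem_patternOn.1 (hNT p.2)).2]
  calc nu (patternOn P T) = Fintype.card N := by simp [hcard]
    _ = (matchingMinor (patternMatrix P x) N).rank :=
        (Matrix.rank_of_det_ne_zero (hdet N (hNT.trans (Finset.filter_subset _ P)) hN)).symm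
    _ ≤ (rowRestrict (patternMatrix P x) T).rank := hminor ▸ Matrix.rank_submatrix_le _ _ _

theorem sprank_eq_nu (P : Finset (Fin m × Fin n)) : sprank P = nu P := by
  obtain ⟨A, hA, hgen⟩ := exists_hasPattern_forall_nu_le_rank P
  have hbdd : BddAbove {r : ℕ | ∃ A : Matrix (Fin m) (Fin n) ℝ, HasPattern P A ∧ A.rank = r} :=
    ⟨nu P, fun _ ⟨B, hB, hr⟩ => hr ▸ hB.rank_le_nu⟩
  have hA_nu := hgen Finset.univ
  rw [patternOn_univ, rowRestrict_univ] at hA_nu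
  exact le_antisymm (csSup_le ⟨_, A, hA, rfl⟩ fun _ ⟨B, hB, hr⟩ => hr ▸ hB.rank_le_nu)
    (hA_nu.trans (le_csSup hbdd ⟨A, hA, rfl⟩))

lemma nu_patternOn_insert_le (P : Finset (Fin m × Fin n)) (T : Finset (Fin m)) (a : Fin m) :
    nu (patternOn P (insert a T)) ≤ nu (patternOn P T) + 1 := by
  refine nu_le_of_forall fun N hNP hN => ?_
  rw [← Finset.card_filter_add_card_filter_not (s := N) (fun p => p.1 ≠ a)]
  gcongr
  · refine (hN.mono (Finset.filter_subset _ N)).card_le_nu fun p hp => ?_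
    rw [Finset.mem_filter] at hp
    obtain ⟨hpP, hpT⟩ := mem_patternOn.1 (hNP hp.1)
    exact mem_patternOn.2 ⟨hpP, (Finset.mem_insert.1 hpT).resolve_left hp.2⟩
  · refine Finset.card_le_one.2 fun p hp q hq => ?_
    simp only [Finset.mem_filter, not_not] at hp hq
    exact hN.eq_of_fst_eq hp.1 hq.1 (hp.2.trans hq.2.symm)

lemma exists_superset_nu_patternOn_eq {T : Finset (Fin m)} {k : ℕ}
    (hT : nu (patternOn P T) ≤ k) (hk : k ≤ nu P) :
    ∃ T', T ⊆ T' ∧ nu (patternOn P T') = k := by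
  suffices h : ∀ D : Finset (Fin m), k ≤ nu (patternOn P (D ∪ T)) →
      ∃ T', T ⊆ T' ∧ nu (patternOn P T') = k by
    exact h Finset.univ (by rwa [Finset.union_eq_left.2 (Finset.subset_univ T), patternOn_univ])
  intro D
  induction D using Finset.induction_on with
  | empty => exact fun hD => ⟨T, subset_rfl, le_antisymm hT (by simpa using hD)⟩
  | insert a D _ ih =>
    intro hD
    by_cases hD' : k ≤ nu (patternOn P (D ∪ T))
    · exact ih hD'
    refine ⟨insert a D ∪ T, Finset.subset_union_right, le_antisymm ?_ hD⟩
    have := nu_patternOn_insert_le P (D ∪ T) a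
    rw [← Finset.insert_union] at this
    omega

lemma cospark_le_card_compl {A : Matrix (Fin m) (Fin n) ℝ} {T : Finset (Fin m)}
    (hT : (rowRestrict A T).rank < n) : cospark A ≤ m - T.card := by
  obtain ⟨x, hx, hAx⟩ := (Matrix.rank_lt_iff_exists_mulVec_eq_zero _).1 hT
  have hl0 : l0 (A *ᵥ x) ∈ {k | ∃ x : Fin n → ℝ, x ≠ 0 ∧ l0 (A *ᵥ x) = k} := ⟨x, hx, rfl⟩
  calc cospark A ≤ l0 (A *ᵥ x) := Nat.sInf_le hl0
    _ ≤ Tᶜ.card := Finset.card_le_card fun i hi => Finset.mem_compl.2 fun hiT => ?_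
    _ = m - T.card := by simp [Finset.card_compl]
  have := congrFun hAx i
  rw [rowRestrict_mulVec, if_pos hiT] at this
  exact (Finset.mem_filter.1 hi).2 this

lemma le_cospark (hn : 0 < n) {A : Matrix (Fin m) (Fin n) ℝ} {k : ℕ}
    (h : ∀ x : Fin n → ℝ, x ≠ 0 → k ≤ l0 (A *ᵥ x)) : k ≤ cospark A := by
  refine le_csInf ⟨_, fun _ => 1, fun h1 => ?_, rfl⟩ fun _ ⟨x, hx, hk⟩ => hk ▸ h x hx
  simpa using congrFun h1 ⟨0, hn⟩

theorem spcospark_eq_sub_card (hn : 0 < n) (hP : nu P = n) {OPT : Finset (Fin m)}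
    (hOPT : nu (patternOn P OPT) = n - 1)
    (hmax : ∀ T : Finset (Fin m), nu (patternOn P T) = n - 1 → T.card ≤ OPT.card) :
    spcospark P = m - OPT.card := by
  have hub : ∀ A, HasPattern P A → cospark A ≤ m - OPT.card := fun A hA =>
    cospark_le_card_compl ((hasPattern_rowRestrict hA OPT).rank_le_nu.trans_lt (by omega))
  obtain ⟨A, hA, hgen⟩ := exists_hasPattern_forall_nu_le_rank P
  have hcospark : m - OPT.card ≤ cospark A := by
    refine le_cospark hn fun x hx => ?_
    let T := (Finset.univ.filter fun i => (A *ᵥ x) i ≠ 0)ᶜ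
    have hT : nu (patternOn P T) ≤ n - 1 := by
      have : (rowRestrict A T).rank < n := (Matrix.rank_lt_iff_exists_mulVec_eq_zero _).2
        ⟨x, hx, funext fun i => by by_cases hi : i ∈ T <;> simp_all [T, rowRestrict_mulVec]⟩
      exact Nat.le_sub_one_of_lt ((hgen T).trans_lt this)
    obtain ⟨T', hTT', hT'⟩ := exists_superset_nu_patternOn_eq hT (by omega)
    have hT_le := (Finset.card_le_card hTT').trans (hmax T' hT')
    have hl0 : T.card + l0 (A *ᵥ x) = m := by
      simpa [T, l0] using Finset.card_compl_add_card (Finset.univ.filter fun i => (A *ᵥ x) i ≠ 0)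
    omega
  exact IsGreatest.csSup_eq ⟨⟨A, hA, le_antisymm (hub A hA) hcospark⟩,
    fun _ ⟨B, hB, hk⟩ => hk ▸ hub B hB⟩

theorem nu_patternOn_rowsIn_add_card_le {T : Finset (Fin m)} {M : Finset (Fin m × Fin n)}
    (hMT : M ⊆ patternOn P T) (hM : IsMatching M) (hMcard : M.card = nu (patternOn P T)) :
    nu (patternOn P (rowsIn P (M.image Prod.snd))) + T.card ≤
      (rowsIn P (M.image Prod.snd)).card + M.card := by
  obtain ⟨R, hRT, hR⟩ := exists_subset_card_add_card_colsOf_le P T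
  have hTR := Finset.card_sdiff_of_subset hRT
  have hRT' := Finset.card_le_card hRT
  have hRW : colsOf P R ⊆ M.image Prod.snd := by
    by_contra hRW
    have hlt : (colsOf P R ∩ M.image Prod.snd).card < (colsOf P R).card :=
      Finset.card_lt_card ⟨Finset.inter_subset_left, fun h => hRW fun _ hc =>
        (Finset.mem_inter.1 (h hc)).2⟩
    have hM_le := hM.card_le_card_sdiff_add hMT R
    omega
  have hRX := subset_rowsIn_of_colsOf_subset hRW
  have hX_le := nu_patternOn_le (P := P) (rowsIn P (M.image Prod.snd)) R
  have hXR := Finset.card_sdiff_of_subset hRX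
  have hRX' := Finset.card_le_card hRX
  omega

end

theorem stmt14_general {m n : ℕ} (hn : 1 ≤ n) (S : Finset (Fin m × Fin n))
    (hspr : sprank S = n)
    (OPT : Finset (Fin m)) (hOPT : nu (patternOn S OPT) = n - 1)
    (hmax : ∀ T : Finset (Fin m), nu (patternOn S T) = n - 1 → T.card ≤ OPT.card)
    (M : Finset (Fin m × Fin n)) (hMsub : M ⊆ patternOn S OPT)
    (hM : IsMatching M) (hMcard : M.card = n - 1)
    (W : Finset (Fin n)) (hW : W = M.image Prod.snd)
    (F : Finset (Fin m)) (hFsub : rowsIn S W ⊆ F)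
    (hFrank : sprank (patternOn S F) = n - 1)
    (hFcard : (n - 1) - sprank (patternOn S (rowsIn S W)) ≤ (F \ rowsIn S W).card) :
    F.card = OPT.card ∧ m - F.card = spcospark S := by
  rw [sprank_eq_nu] at hspr hFrank hFcard
  have hX := nu_patternOn_rowsIn_add_card_le hMsub hM (hMcard.trans hOPT.symm)
  rw [← hW, hMcard] at hX
  have hFO := hmax F hFrank
  have hFX := Finset.card_sdiff_of_subset hFsub
  have hXF := Finset.card_le_card hFsub
  have hcard : F.card = OPT.card := by omega
  exact ⟨hcard, by rw [hcard, spcospark_eq_sub_card hn hspr hOPT hmax]⟩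

/-- in the OPT setup, any set of rows `F ⊇ X_{W*}` with
`sprank(A^S_F) = n - 1` and `|F \ X_{W*}| ≥ (n-1) - sprank(A^S_{X_{W*}})` satisfies
`|F| = |OPT|`, hence `m - |F| = spcospark S`. -/
theorem stmt14 {m n : ℕ} (hn : 1 ≤ n) (hmn : n < m) (S : Finset (Fin m × Fin n))
    (hspr : sprank S = n)
    (OPT : Finset (Fin m)) (hOPT : nu (patternOn S OPT) = n - 1)
    (hmax : ∀ T : Finset (Fin m), nu (patternOn S T) = n - 1 → T.card ≤ OPT.card)
    (M : Finset (Fin m × Fin n)) (hMsub : M ⊆ patternOn S OPT)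
    (hM : IsMatching M) (hMcard : M.card = n - 1)
    (I : Finset (Fin m)) (hI : I = M.image Prod.fst)
    (J : Finset (Fin m)) (hJ : J = OPT \ I) (hJne : J.Nonempty)
    (W : Finset (Fin n)) (hW : W = M.image Prod.snd)
    (v : Fin n) (hv : v ∉ W)
    (F : Finset (Fin m)) (hFsub : rowsIn S W ⊆ F)
    (hFrank : sprank (patternOn S F) = n - 1)
    (hFcard : (n - 1) - sprank (patternOn S (rowsIn S W)) ≤ (F \ rowsIn S W).card) :
    F.card = OPT.card ∧ m - F.card = spcospark S :=
  stmt14_general hn S hspr OPT hOPT hmax M hMsub hM hMcard W hW F hFsub hFrank hFcard
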